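/- arXiv:1005.0211 — 3 statements merged into one kernel-verified Lean document; each statement's English description precedes it below -/
import Mathlib

section
/- Let f : ℝ → ℝ be a convex function, let a < b be real numbers, and let {π_m} be a sequence of partitions of [a,b] with mesh ‖π_m‖ → 0 as m → ∞. Let P_m be the convex linear approximation of f based on π_m. Then for every x ∈ (a,b), P_m(x) → f(x) as m → ∞. -/
/-!
Fix `x ∈ (a, b)` and let `[u_m, v_m]` be a cell of `π_m` containing `x`. On that cell `P_m` is the
chord of `f`, so convexity gives `f x ≤ P_m x`, while an affine function is bounded on a segment by
its endpoint values, so `P_m x ≤ max (f u_m) (f v_m)`. Since `v_m - u_m ≤ ‖π_m‖ → 0`, both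
`u_m` and `v_m` tend to `x`, and continuity of the convex function `f` squeezes `P_m x` to `f x`.
-/

open Set Filter Topology

lemma exists_le_lt_succ_of_le_of_lt {p : ℕ → ℝ} {x : ℝ} :
    ∀ {n : ℕ}, p 0 ≤ x → x < p n → ∃ i < n, p i ≤ x ∧ x < p (i + 1)
  | 0, h0, hn => absurd h0 (not_le.2 hn)
  | n + 1, h0, hn => by
    by_cases hx : p n ≤ x
    · exact ⟨n, n.lt_succ_self, hx, hn⟩
    · obtain ⟨i, hi, hpi⟩ := exists_le_lt_succ_of_le_of_lt h0 (not_le.1 hx)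
      exact ⟨i, hi.trans n.lt_succ_self, hpi⟩

lemma ConvexOn.le_and_le_max_of_affine_interpolant {f g : ℝ → ℝ} {s : Set ℝ}
    (hf : ConvexOn ℝ s f) {u v x : ℝ} (hu : u ∈ s) (hv : v ∈ s)
    (hgu : g u = f u) (hgv : g v = f v) (hg : ∃ c d : ℝ, ∀ y ∈ Icc u v, g y = c * y + d)
    (hx : x ∈ Icc u v) : f x ≤ g x ∧ g x ≤ max (f u) (f v) := by
  obtain ⟨c, d, hg⟩ := hg
  have huv : u ≤ v := hx.1.trans hx.2
  have hx' : x ∈ segment ℝ u v := by rwa [segment_eq_Icc huv]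
  obtain ⟨α, β, hα, hβ, hαβ, rfl⟩ := hx'
  have hinterp : g (α • u + β • v) = α • f u + β • f v := by
    rw [hg _ hx, ← hgu, ← hgv, hg u ⟨le_rfl, huv⟩, hg v ⟨huv, le_rfl⟩]
    simp only [smul_eq_mul]
    linear_combination (-d) * hαβ
  rw [hinterp]
  exact ⟨hf.2 hu hv hα hβ hαβ, Convex.combo_le_max _ _ hα hβ hαβ⟩

lemma tendsto_of_le_of_le_of_tendsto_sub_zero {ι : Type*} {l : Filter ι} {u v : ι → ℝ} {x : ℝ}
    (hu : ∀ i, u i ≤ x) (hv : ∀ i, x ≤ v i) (huv : Tendsto (v - u) l (𝓝 0)) :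
    Tendsto u l (𝓝 x) ∧ Tendsto v l (𝓝 x) := by
  have hlo : Tendsto (fun i => x - (v i - u i)) l (𝓝 x) := by
    simpa using tendsto_const_nhds.sub huv
  have hhi : Tendsto (fun i => x + (v i - u i)) l (𝓝 x) := by
    simpa using tendsto_const_nhds.add huv
  exact ⟨tendsto_of_tendsto_of_tendsto_of_le_of_le hlo tendsto_const_nhds
      (fun i => by linarith [hv i]) hu,
    tendsto_of_tendsto_of_tendsto_of_le_of_le tendsto_const_nhds hhi hv
      (fun i => by linarith [hu i])⟩

theorem convexLinearApprox_tendsto_general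
    (f : ℝ → ℝ) (hf : ConvexOn ℝ Set.univ f)
    (a b : ℝ)
    (N : ℕ → ℕ)
    (pts : ℕ → ℕ → ℝ)
    (hpts0 : ∀ m, pts m 0 = a) (hptsN : ∀ m, pts m (N m) = b)
    (hmono : ∀ m, ∀ i < N m, pts m i < pts m (i + 1))
    (hmesh : Filter.Tendsto
      (fun m => ⨆ i : Fin (N m), (pts m ((i : ℕ) + 1) - pts m (i : ℕ)))
      Filter.atTop (nhds 0))
    (P : ℕ → ℝ → ℝ)
    (hPf : ∀ m, ∀ i ≤ N m, P m (pts m i) = f (pts m i))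
    (hPaff : ∀ m, ∀ i < N m, ∃ c d : ℝ,
      ∀ x ∈ Set.Icc (pts m i) (pts m (i + 1)), P m x = c * x + d) :
    ∀ x ∈ Set.Ioo a b,
      Filter.Tendsto (fun m => P m x) Filter.atTop (nhds (f x)) := by
  rintro x ⟨hax, hxb⟩
  choose k hk hlo hhi using fun m =>
    exists_le_lt_succ_of_le_of_lt (p := pts m) ((hpts0 m).symm ▸ hax.le) ((hptsN m).symm ▸ hxb)
  have hcell : Tendsto (fun m => pts m (k m + 1) - pts m (k m)) atTop (𝓝 0) :=
    squeeze_zero (fun m => (sub_pos.2 (hmono m _ (hk m))).le)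
      (fun m => le_ciSup (f := fun i : Fin (N m) => pts m ((i : ℕ) + 1) - pts m (i : ℕ))
        (Set.finite_range _).bddAbove ⟨k m, hk m⟩) hmesh
  obtain ⟨hu, hv⟩ := tendsto_of_le_of_le_of_tendsto_sub_zero hlo (fun m => (hhi m).le) hcell
  have hfx : Tendsto f (𝓝 x) (𝓝 (f x)) :=
    ((hf.continuousOn isOpen_univ).continuousAt univ_mem).tendsto
  have hbounds := fun m => hf.le_and_le_max_of_affine_interpolant (mem_univ _) (mem_univ _)
    (hPf m _ (hk m).le) (hPf m _ (hk m)) (hPaff m _ (hk m)) ⟨hlo m, (hhi m).le⟩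
  refine tendsto_of_tendsto_of_tendsto_of_le_of_le tendsto_const_nhds ?_
    (fun m => (hbounds m).1) (fun m => (hbounds m).2)
  simpa only [max_self, Function.comp_def] using (hfx.comp hu).max (hfx.comp hv)

/-- Theorem 2.3 (i), first part: if `P m` is the convex linear approximation of the convex
function `f` based on a partition `π_m` of `[a, b]` and the meshes `‖π_m‖` tend to `0`,
then `P m x → f x` for every `x ∈ (a, b)`. -/
theorem convexLinearApprox_tendsto
    (f : ℝ → ℝ) (hf : ConvexOn ℝ Set.univ f)
    (a b : ℝ) (hab : a < b)
    (N : ℕ → ℕ) (hN : ∀ m, 0 < N m)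
    (pts : ℕ → ℕ → ℝ)
    (hpts0 : ∀ m, pts m 0 = a) (hptsN : ∀ m, pts m (N m) = b)
    (hmono : ∀ m, ∀ i < N m, pts m i < pts m (i + 1))
    (hmesh : Filter.Tendsto
      (fun m => ⨆ i : Fin (N m), (pts m ((i : ℕ) + 1) - pts m (i : ℕ)))
      Filter.atTop (nhds 0))
    (P : ℕ → ℝ → ℝ)
    (hPf : ∀ m, ∀ i ≤ N m, P m (pts m i) = f (pts m i))
    (hPaff : ∀ m, ∀ i < N m, ∃ c d : ℝ,
      ∀ x ∈ Set.Icc (pts m i) (pts m (i + 1)), P m x = c * x + d) :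
    ∀ x ∈ Set.Ioo a b,
      Filter.Tendsto (fun m => P m x) Filter.atTop (nhds (f x)) :=
  convexLinearApprox_tendsto_general f hf a b N pts hpts0 hptsN hmono hmesh P hPf hPaff
end

section
/- Let f : ℝ → ℝ be a convex function, let a < b be real numbers, and let {π_m} be a sequence of partitions of [a,b] with mesh ‖π_m‖ → 0 as m → ∞. Let P_m be the convex linear approximation of f based on π_m. Then for every x ∈ (a,b) at which f is differentiable (equivalently, at which the left and right derivatives of f coincide), the left derivative (P_m)'_−(x) converges to f'_−(x) as m → ∞. -/
/-!
On the cell `[u, v]` of the partition with `u < x ≤ v`, the convex linear approximation is the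
chord of `f`, so its left derivative at `x` is the secant slope of `f` over `[u, v]`. By
convexity this slope lies between the slopes of `f` from `x` to `x - (v - u)` and to
`x + (v - u)`, and both tend to `f'(x)` as the mesh, hence `v - u`, tends to `0`.
-/

open Filter Set Topology

lemma exists_lt_le_succ_of_lt_of_le {α : Type*} [LinearOrder α] {p : ℕ → α} {x : α} {n : ℕ}
    (h0 : p 0 < x) (hn : x ≤ p n) : ∃ i < n, p i < x ∧ x ≤ p (i + 1) := by
  induction n with
  | zero => exact absurd h0 hn.not_gt
  | succ k ih =>
    by_cases hk : x ≤ p k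
    · obtain ⟨i, hik, hi⟩ := ih hk
      exact ⟨i, hik.trans k.lt_succ_self, hi⟩
    · exact ⟨k, k.lt_succ_self, not_le.1 hk, hn⟩

section ConvexSlope

variable {𝕜 : Type*} [Field 𝕜] [LinearOrder 𝕜] [IsStrictOrderedRing 𝕜] {f : 𝕜 → 𝕜} {u x v : 𝕜}

lemma ConvexOn.slope_sub_le_slope (hf : ConvexOn 𝕜 univ f) (hux : u < x) (hxv : x ≤ v) :
    slope f x (x - (v - u)) ≤ slope f u v := by
  set p := x - (v - u)
  have hpu : p ≤ u := by linarith
  have hpx : p < x := hpu.trans_lt hux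
  have hpv : p < v := hpx.trans_le hxv
  calc slope f x p = slope f p x := slope_comm f x p
    _ ≤ slope f p v :=
      hf.slope_mono (mem_univ p) ⟨mem_univ x, hpx.ne'⟩ ⟨mem_univ v, hpv.ne'⟩ hxv
    _ = slope f v p := slope_comm f p v
    _ ≤ slope f v u :=
      hf.slope_mono (mem_univ v) ⟨mem_univ p, hpv.ne⟩ ⟨mem_univ u, (hux.trans_le hxv).ne⟩ hpu
    _ = slope f u v := slope_comm f v u

lemma ConvexOn.slope_le_slope_add (hf : ConvexOn 𝕜 univ f) (hux : u < x) (hxv : x ≤ v) :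
    slope f u v ≤ slope f x (x + (v - u)) := by
  set q := x + (v - u)
  have hvq : v ≤ q := by linarith
  have hxq : x < q := by linarith
  have huq : u < q := hux.trans hxq
  calc slope f u v ≤ slope f u q :=
      hf.slope_mono (mem_univ u) ⟨mem_univ v, (hux.trans_le hxv).ne'⟩ ⟨mem_univ q, huq.ne'⟩ hvq
    _ = slope f q u := slope_comm f u q
    _ ≤ slope f q x :=
      hf.slope_mono (mem_univ q) ⟨mem_univ u, huq.ne⟩ ⟨mem_univ x, hxq.ne⟩ hux.le
    _ = slope f x q := slope_comm f q x

end ConvexSlope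

theorem ConvexOn.tendsto_slope_of_hasDerivAt {ι : Type*} {l : Filter ι} {f : ℝ → ℝ} {f' x : ℝ}
    (hf : ConvexOn ℝ univ f) (hd : HasDerivAt f f' x) {u v : ι → ℝ} (hux : ∀ i, u i < x)
    (hxv : ∀ i, x ≤ v i) (hlen : Tendsto (fun i => v i - u i) l (𝓝 0)) :
    Tendsto (fun i => slope f (u i) (v i)) l (𝓝 f') := by
  have hslope : ∀ w : ι → ℝ, Tendsto w l (𝓝 x) → (∀ i, w i ≠ x) →
      Tendsto (fun i => slope f x (w i)) l (𝓝 f') := fun w hw hne =>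
    (hasDerivAt_iff_tendsto_slope.1 hd).comp
      (tendsto_nhdsWithin_iff.2 ⟨hw, Eventually.of_forall hne⟩)
  have hpos : ∀ i, 0 < v i - u i := fun i => sub_pos.2 ((hux i).trans_le (hxv i))
  refine tendsto_of_tendsto_of_tendsto_of_le_of_le
    (hslope _ (by simpa using tendsto_const_nhds.sub hlen) fun i => (sub_lt_self x (hpos i)).ne)
    (hslope _ (by simpa using tendsto_const_nhds.add hlen) fun i =>
      (lt_add_of_pos_right x (hpos i)).ne')
    (fun i => hf.slope_sub_le_slope (hux i) (hxv i))
    (fun i => hf.slope_le_slope_add (hux i) (hxv i))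

theorem derivWithin_Iic_eq_slope_of_affineOn {P : ℝ → ℝ} {c d u v x : ℝ}
    (hP : ∀ y ∈ Icc u v, P y = c * y + d) (hux : u < x) (hxv : x ≤ v) :
    derivWithin P (Iic x) x = slope P u v := by
  have huv : u < v := hux.trans_le hxv
  have hslope : slope P u v = c := by
    rw [slope_def_field, hP u ⟨le_rfl, huv.le⟩, hP v ⟨huv.le, le_rfl⟩]
    field_simp [sub_ne_zero.2 huv.ne']
    ring
  have hloc : P =ᶠ[𝓝[≤] x] fun y => c * y + d := by
    filter_upwards [mem_nhdsWithin_of_mem_nhds (Ioi_mem_nhds hux), self_mem_nhdsWithin]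
      with y huy hyx
    exact hP y ⟨huy.le, hyx.trans hxv⟩
  have hline : HasDerivAt (fun y : ℝ => c * y + d) c x := by
    simpa using ((hasDerivAt_id x).const_mul c).add_const d
  rw [hslope, hloc.derivWithin_eq (hP x ⟨hux.le, hxv⟩)]
  exact hline.hasDerivWithinAt.derivWithin (uniqueDiffOn_Iic x x self_mem_Iic)

theorem convexLinearApprox_leftDeriv_tendsto_general
    (f : ℝ → ℝ) (hf : ConvexOn ℝ Set.univ f)
    (a b : ℝ)
    (N : ℕ → ℕ)
    (pts : ℕ → ℕ → ℝ)
    (hpts0 : ∀ m, pts m 0 = a) (hptsN : ∀ m, pts m (N m) = b)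
    (hmesh : Filter.Tendsto
      (fun m => ⨆ i : Fin (N m), (pts m ((i : ℕ) + 1) - pts m (i : ℕ)))
      Filter.atTop (nhds 0))
    (P : ℕ → ℝ → ℝ)
    (hPf : ∀ m, ∀ i ≤ N m, P m (pts m i) = f (pts m i))
    (hPaff : ∀ m, ∀ i < N m, ∃ c d : ℝ,
      ∀ x ∈ Set.Icc (pts m i) (pts m (i + 1)), P m x = c * x + d) :
    ∀ x ∈ Set.Ioo a b, DifferentiableAt ℝ f x →
      Filter.Tendsto (fun m => derivWithin (P m) (Set.Iic x) x) Filter.atTop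
        (nhds (derivWithin f (Set.Iic x) x)) := by
  intro x hx hdiff
  choose i hiN hlt hle using fun m =>
    exists_lt_le_succ_of_lt_of_le (p := pts m) ((hpts0 m).symm ▸ hx.1) ((hptsN m).symm ▸ hx.2.le)
  have hderiv : ∀ m,
      derivWithin (P m) (Iic x) x = slope f (pts m (i m)) (pts m (i m + 1)) := by
    intro m
    obtain ⟨c, d, hcd⟩ := hPaff m (i m) (hiN m)
    rw [derivWithin_Iic_eq_slope_of_affineOn hcd (hlt m) (hle m), slope_def_field,
      slope_def_field, hPf m _ (hiN m).le, hPf m _ (hiN m)]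
  have hcell : Tendsto (fun m => pts m (i m + 1) - pts m (i m)) atTop (𝓝 0) :=
    squeeze_zero (fun m => (sub_pos.2 ((hlt m).trans_le (hle m))).le)
      (fun m => le_ciSup (f := fun j : Fin (N m) => pts m (j + 1) - pts m j)
        (Finite.bddAbove_range _) ⟨i m, hiN m⟩) hmesh
  rw [hdiff.derivWithin (uniqueDiffOn_Iic x x self_mem_Iic)]
  exact (hf.tendsto_slope_of_hasDerivAt hdiff.hasDerivAt hlt hle hcell).congr
    fun m => (hderiv m).symm

/-- Theorem 2.3 (i), second part: if `P m` is the convex linear approximation of the convex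
function `f` based on a partition `π_m` of `[a, b]` with mesh tending to `0`, then at every
point `x ∈ (a, b)` where `f` is differentiable, the left derivatives `(P m)'_−(x)`
(realized as derivatives from within `(-∞, x]`) converge to `f'_−(x)`. -/
theorem convexLinearApprox_leftDeriv_tendsto
    (f : ℝ → ℝ) (hf : ConvexOn ℝ Set.univ f)
    (a b : ℝ) (hab : a < b)
    (N : ℕ → ℕ) (hN : ∀ m, 0 < N m)
    (pts : ℕ → ℕ → ℝ)
    (hpts0 : ∀ m, pts m 0 = a) (hptsN : ∀ m, pts m (N m) = b)
    (hmono : ∀ m, ∀ i < N m, pts m i < pts m (i + 1))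
    (hmesh : Filter.Tendsto
      (fun m => ⨆ i : Fin (N m), (pts m ((i : ℕ) + 1) - pts m (i : ℕ)))
      Filter.atTop (nhds 0))
    (P : ℕ → ℝ → ℝ)
    (hPf : ∀ m, ∀ i ≤ N m, P m (pts m i) = f (pts m i))
    (hPaff : ∀ m, ∀ i < N m, ∃ c d : ℝ,
      ∀ x ∈ Set.Icc (pts m i) (pts m (i + 1)), P m x = c * x + d) :
    ∀ x ∈ Set.Ioo a b, DifferentiableAt ℝ f x →
      Filter.Tendsto (fun m => derivWithin (P m) (Set.Iic x) x) Filter.atTop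
        (nhds (derivWithin f (Set.Iic x) x)) :=
  convexLinearApprox_leftDeriv_tendsto_general f hf a b N pts hpts0 hptsN hmesh P hPf hPaff
end

section
/- Let f : ℝ → ℝ be a convex function, let a < b be real numbers, and assume f is affine on (−∞, a] and affine on [b, ∞). Let {π_m} be a sequence of partitions of [a,b] with mesh ‖π_m‖ → 0, and let P_m : ℝ → ℝ be the convex linear approximation of f based on π_m on [a,b], extended by f outside [a,b]. Let μ be the Stieltjes measure associated with the (monotone, right-continuous) right derivative f'_+ of f, and let μ_m be the Stieltjes measure associated with the right derivative (P_m)'_+ of P_m. Then for every bounded continuous function g : ℝ → ℝ, ∫_{[a,b]} g dμ_m → ∫_{[a,b]} g dμ as m → ∞. -/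
open MeasureTheory Set Filter

/-!
On a cell `[xᵢ, xᵢ₊₁]` of the partition, the right derivative of the interpolant `P` is the
secant slope `sᵢ` of `f`, which convexity traps between `f'₊(xᵢ)` and `f'₊(xᵢ₊₁)`; since `P = f`
off `(x₀, xₙ)`, the two right derivatives agree to the left of `x₀` and at `xₙ`. Replacing each
integral by its right-endpoint Riemann–Stieltjes sum costs at most `ε (f'₊(b) - f'₊(a))`, where
`ε` is the oscillation of `g` over a cell. Both right derivatives have the same left limit at
`a`, so after summation by parts the difference of the two sums, atoms at `a` included, is
`∑ (g(xᵢ) - g(xᵢ₊₁)) (sᵢ - f'₊(xᵢ))`, which is again at most `ε (f'₊(b) - f'₊(a))`. Uniform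
continuity of `g` on `[a, b]` and the vanishing mesh make `ε → 0`.
-/

lemma mem_Icc_of_le_add_one {α : Type*} [Preorder α] {x : ℕ → α} {n i : ℕ}
    (hx : ∀ i < n, x i ≤ x (i + 1)) (hi : i ≤ n) : x i ∈ Icc (x 0) (x n) := by
  have hmono : MonotoneOn x (Iic n) :=
    monotoneOn_of_le_succ ordConnected_Iic fun j _ _ hj => by
      simpa using hx j (Order.succ_le_iff.1 hj)
  exact ⟨hmono (Nat.zero_le n) hi (Nat.zero_le i), hmono hi (mem_Iic.2 le_rfl) hi⟩

namespace ConvexOn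

variable {S : Set ℝ} {f : ℝ → ℝ} {x y : ℝ}

lemma derivWithin_Ici_le_slope (hf : ConvexOn ℝ S f) (hx : x ∈ interior S) (hy : y ∈ S)
    (hxy : x < y) : derivWithin f (Ici x) x ≤ slope f x y := by
  rw [← derivWithin_Ioi_eq_Ici]
  exact hf.rightDeriv_le_slope_of_mem_interior hx hy hxy

lemma slope_le_derivWithin_Ici (hf : ConvexOn ℝ S f) (hx : x ∈ S) (hy : y ∈ interior S)
    (hxy : x < y) : slope f x y ≤ derivWithin f (Ici y) y := by
  rw [← derivWithin_Ioi_eq_Ici]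
  exact (hf.slope_le_leftDeriv_of_mem_interior hx hy hxy).trans
    (hf.leftDeriv_le_rightDeriv_of_mem_interior hy)

end ConvexOn

lemma derivWithin_Ici_eq_slope_of_eqOn_Icc {p : ℝ → ℝ} {u v c d : ℝ} (huv : u < v)
    (hp : EqOn p (fun y => c * y + d) (Icc u v)) : derivWithin p (Ici u) u = slope p u v := by
  have hderiv : HasDerivWithinAt p c (Ici u) u := by
    refine HasDerivWithinAt.congr_of_eventuallyEq (f := fun y => c * y + d) ?_ ?_ (hp ⟨le_rfl, huv.le⟩)
    · simpa using (((hasDerivAt_id u).const_mul c).add_const d).hasDerivWithinAt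
    · filter_upwards [Ico_mem_nhdsGE huv] with y hy using hp (Ico_subset_Icc_self hy)
  rw [hderiv.derivWithin (uniqueDiffWithinAt_Ici u), slope_def_field, hp ⟨le_rfl, huv.le⟩,
    hp ⟨huv.le, le_rfl⟩]
  field_simp [sub_ne_zero.2 huv.ne']
  ring

/-- `P` is the convex linear approximation of `f` based on the points `x 0, …, x n`, extended by
`f` outside `[x 0, x n]`. -/
structure IsLinearInterpolation (P f : ℝ → ℝ) (x : ℕ → ℝ) (n : ℕ) : Prop where
  eq_of_le : ∀ i ≤ n, P (x i) = f (x i)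
  affine : ∀ i < n, ∃ c d : ℝ, ∀ y ∈ Icc (x i) (x (i + 1)), P y = c * y + d
  eq_of_notMem : ∀ y ∉ Icc (x 0) (x n), P y = f y

namespace IsLinearInterpolation

variable {P f : ℝ → ℝ} {x : ℕ → ℝ} {n : ℕ}

lemma derivWithin_Ici_node (hP : IsLinearInterpolation P f x n) {i : ℕ} (hi : i < n)
    (hx : x i < x (i + 1)) : derivWithin P (Ici (x i)) (x i) = slope f (x i) (x (i + 1)) := by
  obtain ⟨c, d, hcd⟩ := hP.affine i hi
  rw [derivWithin_Ici_eq_slope_of_eqOn_Icc hx hcd, slope_def_field, slope_def_field,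
    hP.eq_of_le i hi.le, hP.eq_of_le (i + 1) hi]

lemma derivWithin_Ici_last (hP : IsLinearInterpolation P f x n) :
    derivWithin P (Ici (x n)) (x n) = derivWithin f (Ici (x n)) (x n) := by
  have hPf : EqOn P f (Ici (x n)) := by
    intro y hy
    rcases (mem_Ici.1 hy).eq_or_lt with rfl | hlt
    · exact hP.eq_of_le n le_rfl
    · exact hP.eq_of_notMem y fun h => h.2.not_gt hlt
  exact derivWithin_congr hPf (hPf self_mem_Ici)

lemma derivWithin_Ici_of_lt (hP : IsLinearInterpolation P f x n) {t : ℝ} (ht : t < x 0) :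
    derivWithin P (Ici t) t = derivWithin f (Ici t) t :=
  Filter.EventuallyEq.derivWithin_eq_of_nhds <| by
    filter_upwards [Iio_mem_nhds ht] with y hy using hP.eq_of_notMem y fun h => h.1.not_gt hy

end IsLinearInterpolation

noncomputable def stieltjesSum (H g : ℝ → ℝ) (x : ℕ → ℝ) (n : ℕ) : ℝ :=
  ∑ i ∈ Finset.range n, (H (x (i + 1)) - H (x i)) * g (x (i + 1))

lemma stieltjesSum_sub (H K g : ℝ → ℝ) (x : ℕ → ℝ) (n : ℕ) :
    stieltjesSum (fun t => H t - K t) g x n = stieltjesSum H g x n - stieltjesSum K g x n := by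
  simp only [stieltjesSum, ← Finset.sum_sub_distrib]
  exact Finset.sum_congr rfl fun i _ => by ring

lemma add_stieltjesSum_eq_sum (D g : ℝ → ℝ) (x : ℕ → ℝ) (n : ℕ) :
    D (x 0) * g (x 0) + stieltjesSum D g x n
      = ∑ i ∈ Finset.range n, (g (x i) - g (x (i + 1))) * D (x i) + D (x n) * g (x n) := by
  induction n with
  | zero => simp [stieltjesSum]
  | succ n ih =>
    simp only [stieltjesSum, Finset.sum_range_succ] at ih ⊢
    linear_combination ih

lemma abs_add_stieltjesSum_le {D g : ℝ → ℝ} {x : ℕ → ℝ} {n : ℕ} {ε : ℝ} (w : ℕ → ℝ)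
    (hD : ∀ i < n, 0 ≤ D (x i) ∧ D (x i) ≤ w i) (hDn : D (x n) = 0)
    (hg : ∀ i < n, |g (x i) - g (x (i + 1))| ≤ ε) :
    |D (x 0) * g (x 0) + stieltjesSum D g x n| ≤ ε * ∑ i ∈ Finset.range n, w i := by
  rw [add_stieltjesSum_eq_sum, hDn, zero_mul, add_zero, Finset.mul_sum]
  refine (Finset.abs_sum_le_sum_abs _ _).trans (Finset.sum_le_sum fun i hi => ?_)
  obtain ⟨hD0, hDw⟩ := hD i (Finset.mem_range.1 hi)
  have hgi := hg i (Finset.mem_range.1 hi)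
  rw [abs_mul, abs_of_nonneg hD0]
  exact mul_le_mul hgi hDw hD0 ((abs_nonneg _).trans hgi)

namespace StieltjesFunction

variable (H : StieltjesFunction ℝ) {g : ℝ → ℝ} {u v : ℝ}

lemma measureReal_Ioc (huv : u ≤ v) : H.measure.real (Ioc u v) = H v - H u := by
  rw [measureReal_def, H.measure_Ioc, ENNReal.toReal_ofReal (sub_nonneg.2 (H.mono huv))]

lemma leftLim_eq_of_eqOn_Iio {H K : StieltjesFunction ℝ} (h : EqOn H K (Iio u)) :
    Function.leftLim H u = Function.leftLim K u :=
  leftLim_eq_of_tendsto <| (K.mono.tendsto_leftLim u).congr' <|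
    eventually_nhdsWithin_of_forall fun _ ht => (h ht).symm

lemma setIntegral_Icc_eq (hg : IntegrableOn g (Icc u v) H.measure) (huv : u ≤ v) :
    ∫ t in Icc u v, g t ∂H.measure
      = (H u - Function.leftLim H u) * g u + ∫ t in Ioc u v, g t ∂H.measure := by
  rw [← Ioc_union_left huv] at hg ⊢
  rw [setIntegral_union (by simp) (measurableSet_singleton u) (hg.mono_set subset_union_left)
    (hg.mono_set subset_union_right), integral_singleton, measureReal_def, H.measure_singleton,
    ENNReal.toReal_ofReal (sub_nonneg.2 (H.mono.leftLim_le le_rfl)), smul_eq_mul, add_comm]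

lemma abs_setIntegral_Ioc_sub_le (hg : IntegrableOn g (Ioc u v) H.measure) (huv : u ≤ v)
    {c ε : ℝ} (hgc : ∀ t ∈ Ioc u v, |g t - c| ≤ ε) :
    |∫ t in Ioc u v, g t ∂H.measure - (H v - H u) * c| ≤ ε * (H v - H u) := by
  have hfin : H.measure (Ioc u v) < ⊤ := by
    rw [H.measure_Ioc]
    exact ENNReal.ofReal_lt_top
  have h := norm_setIntegral_le_of_norm_le_const hfin (f := fun t => g t - c) hgc
  rw [integral_sub hg (integrableOn_const hfin.ne), setIntegral_const, H.measureReal_Ioc huv,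
    smul_eq_mul] at h
  simpa only [Real.norm_eq_abs, H.measureReal_Ioc huv] using h

lemma abs_setIntegral_Ioc_sub_stieltjesSum_le (hg : Continuous g) {x : ℕ → ℝ} {n : ℕ} {ε : ℝ}
    (hx : ∀ i < n, x i ≤ x (i + 1))
    (hgx : ∀ i < n, ∀ t ∈ Ioc (x i) (x (i + 1)), |g t - g (x (i + 1))| ≤ ε) :
    |∫ t in Ioc (x 0) (x n), g t ∂H.measure - stieltjesSum H g x n|
      ≤ ε * (H (x n) - H (x 0)) := by
  have hsplit : ∫ t in Ioc (x 0) (x n), g t ∂H.measure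
      = ∑ i ∈ Finset.range n, ∫ t in Ioc (x i) (x (i + 1)), g t ∂H.measure := by
    rw [← intervalIntegral.integral_of_le (mem_Icc_of_le_add_one hx le_rfl).1,
      ← intervalIntegral.sum_integral_adjacent_intervals fun i _ => hg.intervalIntegrable _ _]
    exact Finset.sum_congr rfl fun i hi =>
      intervalIntegral.integral_of_le (hx i (Finset.mem_range.1 hi))
  rw [hsplit, stieltjesSum, ← Finset.sum_sub_distrib, ← Finset.sum_range_sub (fun i => H (x i)),
    Finset.mul_sum]
  refine (Finset.abs_sum_le_sum_abs _ _).trans (Finset.sum_le_sum fun i hi => ?_)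
  have hi := Finset.mem_range.1 hi
  exact H.abs_setIntegral_Ioc_sub_le hg.integrableOn_Ioc (hx i hi) (hgx i hi)

end StieltjesFunction

theorem abs_setIntegral_Icc_sub_le_of_isLinearInterpolation {f P g : ℝ → ℝ} {x : ℕ → ℝ}
    {n : ℕ} {ε : ℝ} (hf : ConvexOn ℝ univ f) (hx : ∀ i < n, x i < x (i + 1))
    (hP : IsLinearInterpolation P f x n) (F G : StieltjesFunction ℝ)
    (hF : ∀ t, F t = derivWithin f (Ici t) t) (hG : ∀ t, G t = derivWithin P (Ici t) t)
    (hg : Continuous g) (hε : 0 ≤ ε)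
    (hgx : ∀ i < n, ∀ t ∈ Icc (x i) (x (i + 1)), |g t - g (x (i + 1))| ≤ ε) :
    |∫ t in Icc (x 0) (x n), g t ∂G.measure - ∫ t in Icc (x 0) (x n), g t ∂F.measure|
      ≤ 3 * ε * (F (x n) - F (x 0)) := by
  have hxle : ∀ i < n, x i ≤ x (i + 1) := fun i hi => (hx i hi).le
  have h0n : x 0 ≤ x n := (mem_Icc_of_le_add_one hxle le_rfl).1
  have hD : ∀ i < n, 0 ≤ G (x i) - F (x i) ∧ G (x i) - F (x i) ≤ F (x (i + 1)) - F (x i) := by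
    intro i hi
    rw [hG, hF, hF, hP.derivWithin_Ici_node hi (hx i hi)]
    have hleft := hf.derivWithin_Ici_le_slope (by simp) (mem_univ _) (hx i hi)
    have hright := hf.slope_le_derivWithin_Ici (mem_univ _) (by simp) (hx i hi)
    constructor <;> linarith
  have hDn : G (x n) - F (x n) = 0 := by rw [hG, hF, hP.derivWithin_Ici_last, sub_self]
  have hD0 : 0 ≤ G (x 0) - F (x 0) := by
    rcases n.eq_zero_or_pos with rfl | hn
    · exact hDn.ge
    · exact (hD 0 hn).1
  have hleftLim : Function.leftLim G (x 0) = Function.leftLim F (x 0) :=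
    StieltjesFunction.leftLim_eq_of_eqOn_Iio fun t ht => by
      rw [hG, hF, hP.derivWithin_Ici_of_lt ht]
  have hgIoc : ∀ i < n, ∀ t ∈ Ioc (x i) (x (i + 1)), |g t - g (x (i + 1))| ≤ ε :=
    fun i hi t ht => hgx i hi t (Ioc_subset_Icc_self ht)
  have hRG := G.abs_setIntegral_Ioc_sub_stieltjesSum_le hg hxle hgIoc
  have hRF := F.abs_setIntegral_Ioc_sub_stieltjesSum_le hg hxle hgIoc
  have hsum := abs_add_stieltjesSum_le (D := fun t => G t - F t) (g := g)
    (fun i => F (x (i + 1)) - F (x i)) hD hDn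
    fun i hi => hgx i hi (x i) ⟨le_rfl, hxle i hi⟩
  rw [Finset.sum_range_sub (fun i => F (x i)), stieltjesSum_sub] at hsum
  have hGF : ε * (G (x n) - G (x 0)) ≤ ε * (F (x n) - F (x 0)) :=
    mul_le_mul_of_nonneg_left (by linarith) hε
  rw [G.setIntegral_Icc_eq hg.integrableOn_Icc h0n, F.setIntegral_Icc_eq hg.integrableOn_Icc h0n,
    hleftLim]
  rw [abs_le] at hRG hRF hsum ⊢
  constructor <;> linarith [hRG.1, hRG.2, hRF.1, hRF.2, hsum.1, hsum.2]

lemma abs_sub_le_of_mesh_le {g : ℝ → ℝ} {x : ℕ → ℝ} {n : ℕ} {δ ε : ℝ}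
    (hg : ∀ u ∈ Icc (x 0) (x n), ∀ v ∈ Icc (x 0) (x n), dist u v ≤ δ → dist (g u) (g v) ≤ ε)
    (hx : ∀ i < n, x i ≤ x (i + 1)) (hmesh : ∀ i < n, x (i + 1) - x i ≤ δ) :
    ∀ i < n, ∀ t ∈ Icc (x i) (x (i + 1)), |g t - g (x (i + 1))| ≤ ε := by
  intro i hi t ht
  have hxi := mem_Icc_of_le_add_one hx hi.le
  have hxi' := mem_Icc_of_le_add_one hx (Nat.succ_le_of_lt hi)
  have hdist : dist t (x (i + 1)) ≤ δ := by
    rw [Real.dist_eq, abs_of_nonpos (by linarith [ht.2])]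
    linarith [ht.1, hmesh i hi]
  simpa only [Real.dist_eq] using hg t (Icc_subset_Icc hxi.1 hxi'.2 ht) _ hxi' hdist

theorem convexLinearApprox_secondDeriv_measure_tendsto_general
    (f : ℝ → ℝ) (hf : ConvexOn ℝ Set.univ f)
    (a b : ℝ)
    (N : ℕ → ℕ)
    (pts : ℕ → ℕ → ℝ)
    (hpts0 : ∀ m, pts m 0 = a) (hptsN : ∀ m, pts m (N m) = b)
    (hmono : ∀ m, ∀ i < N m, pts m i < pts m (i + 1))
    (hmesh : Filter.Tendsto
      (fun m => ⨆ i : Fin (N m), (pts m ((i : ℕ) + 1) - pts m (i : ℕ)))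
      Filter.atTop (nhds 0))
    (P : ℕ → ℝ → ℝ)
    (hPf : ∀ m, ∀ i ≤ N m, P m (pts m i) = f (pts m i))
    (hPaff : ∀ m, ∀ i < N m, ∃ c d : ℝ,
      ∀ x ∈ Set.Icc (pts m i) (pts m (i + 1)), P m x = c * x + d)
    (hPout : ∀ m, ∀ x, x ∉ Set.Icc a b → P m x = f x)
    (F : StieltjesFunction ℝ) (hF : ∀ x, F x = derivWithin f (Set.Ici x) x)
    (Fm : ℕ → StieltjesFunction ℝ) (hFm : ∀ m x, Fm m x = derivWithin (P m) (Set.Ici x) x)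
    (g : ℝ → ℝ) (hg : Continuous g) :
    Filter.Tendsto (fun m => ∫ x in Set.Icc a b, g x ∂(Fm m).measure)
      Filter.atTop (nhds (∫ x in Set.Icc a b, g x ∂F.measure)) := by
  have hle : ∀ m, ∀ i < N m, pts m i ≤ pts m (i + 1) := fun m i hi => (hmono m i hi).le
  have hab : a ≤ b := hpts0 0 ▸ hptsN 0 ▸ (mem_Icc_of_le_add_one (hle 0) le_rfl).1
  have hFab : 0 ≤ F b - F a := sub_nonneg.2 (F.mono hab)
  rw [Metric.tendsto_atTop]
  intro ε hε
  set ε' := ε / (3 * (F b - F a) + 1)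
  obtain ⟨δ, hδ, hgδ⟩ := Metric.uniformContinuousOn_iff_le.1
    (isCompact_Icc.uniformContinuousOn_of_continuous hg.continuousOn) ε' (by positivity)
  obtain ⟨M, hM⟩ := eventually_atTop.1 (hmesh.eventually (eventually_lt_nhds hδ))
  refine ⟨M, fun m hm => ?_⟩
  have hP : IsLinearInterpolation (P m) f (pts m) (N m) :=
    ⟨hPf m, hPaff m, by simpa only [hpts0, hptsN] using hPout m⟩
  have hcell : ∀ i < N m, pts m (i + 1) - pts m i ≤ δ := fun i hi =>
    ((le_ciSup (finite_range _).bddAbove (⟨i, hi⟩ : Fin (N m))).trans_lt (hM m hm)).le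
  have hgx := abs_sub_le_of_mesh_le (by simpa only [hpts0, hptsN] using hgδ) (hle m) hcell
  have hkey := abs_setIntegral_Icc_sub_le_of_isLinearInterpolation hf (hmono m) hP F (Fm m) hF
    (hFm m) hg (by positivity) hgx
  rw [hpts0, hptsN] at hkey
  rw [Real.dist_eq]
  calc _ ≤ 3 * ε' * (F b - F a) := hkey
    _ = ε * (3 * (F b - F a) / (3 * (F b - F a) + 1)) := by ring
    _ < ε := mul_lt_of_lt_one_right hε ((div_lt_one (by positivity)).2 (by linarith))

/-- Theorem 2.3 (ii): let `f` be convex on `ℝ` and affine on `(-∞, a]` and on `[b, ∞)`,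
let `P m` be the convex linear approximation of `f` on `[a, b]` based on partitions with
mesh tending to `0`, extended by `f` outside `[a, b]`.  If `F` (resp. `Fm m`) is the
Stieltjes function given by the right derivative of `f` (resp. of `P m`), whose associated
Lebesgue–Stieltjes measure is the distributional second derivative, then for every bounded
continuous `g : ℝ → ℝ`,
`∫_{[a,b]} g d(μ_m) → ∫_{[a,b]} g dμ` as `m → ∞`. -/
theorem convexLinearApprox_secondDeriv_measure_tendsto
    (f : ℝ → ℝ) (hf : ConvexOn ℝ Set.univ f)
    (a b : ℝ) (hab : a < b)
    (haffL : ∃ c d : ℝ, ∀ x ≤ a, f x = c * x + d)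
    (haffR : ∃ c d : ℝ, ∀ x, b ≤ x → f x = c * x + d)
    (N : ℕ → ℕ) (hN : ∀ m, 0 < N m)
    (pts : ℕ → ℕ → ℝ)
    (hpts0 : ∀ m, pts m 0 = a) (hptsN : ∀ m, pts m (N m) = b)
    (hmono : ∀ m, ∀ i < N m, pts m i < pts m (i + 1))
    (hmesh : Filter.Tendsto
      (fun m => ⨆ i : Fin (N m), (pts m ((i : ℕ) + 1) - pts m (i : ℕ)))
      Filter.atTop (nhds 0))
    (P : ℕ → ℝ → ℝ)
    (hPf : ∀ m, ∀ i ≤ N m, P m (pts m i) = f (pts m i))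
    (hPaff : ∀ m, ∀ i < N m, ∃ c d : ℝ,
      ∀ x ∈ Set.Icc (pts m i) (pts m (i + 1)), P m x = c * x + d)
    (hPout : ∀ m, ∀ x, x ∉ Set.Icc a b → P m x = f x)
    (F : StieltjesFunction ℝ) (hF : ∀ x, F x = derivWithin f (Set.Ici x) x)
    (Fm : ℕ → StieltjesFunction ℝ) (hFm : ∀ m x, Fm m x = derivWithin (P m) (Set.Ici x) x)
    (g : ℝ → ℝ) (hg : Continuous g) (hgb : ∃ C, ∀ x, |g x| ≤ C) :
    Filter.Tendsto (fun m => ∫ x in Set.Icc a b, g x ∂(Fm m).measure)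
      Filter.atTop (nhds (∫ x in Set.Icc a b, g x ∂F.measure)) :=
  convexLinearApprox_secondDeriv_measure_tendsto_general f hf a b N pts hpts0 hptsN hmono hmesh P
    hPf hPaff hPout F hF Fm hFm g hg
end
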